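/- Let N ≥ 3 be odd and let (S,E) be the cycle of length N. Let B in phi with B ≠ ∅. Then at least one connected component of the induced subgraph of (S,E) on S∖supp(B) has even cardinality; in particular there exist s, s' in S with {s,s'} in E and supp(B) ∩ {s,s'} = ∅. -/

import Mathlib

/-- The induced subgraph of `adj` on `I` is a path (type `A_m`, `m ≥ 1`):
there is an injective enumeration `f : Fin (m+1) → S` of `I` such that two
elements of `I` are adjacent iff they are consecutive in the enumeration. -/
def IsPathOn {S : Type} [DecidableEq S] (adj : S → S → Prop) (I : Finset S) : Prop :=
  ∃ (m : ℕ) (f : Fin (m + 1) → S), Function.Injective f ∧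
    I = Finset.image f Finset.univ ∧
    ∀ i j : Fin (m + 1), adj (f i) (f j) ↔ ((i : ℕ) + 1 = (j : ℕ) ∨ (j : ℕ) + 1 = (i : ℕ))

/-- The induced subgraph of `adj` on `I` is connected. -/
def ConnOn {S : Type} (adj : S → S → Prop) (I : Finset S) : Prop :=
  ∀ s ∈ I, ∀ t ∈ I, Relation.ReflTransGen (fun a b => a ∈ I ∧ b ∈ I ∧ adj a b) s t

/-- `I ∈ Cal_I^1`: the induced subgraph on `I` is a path and `|I|` is odd. -/
def CalI1 {S : Type} [DecidableEq S] (adj : S → S → Prop) (I : Finset S) : Prop :=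
  IsPathOn adj I ∧ Odd I.card

/-- `I ≺ I'`. -/
def Prec {S : Type} [DecidableEq S] (adj : S → S → Prop) (I I' : Finset S) : Prop :=
  I ⊂ I' ∧ ¬ ConnOn adj (I' \ I)

/-- `I ♠ I'`. -/
def Spade {S : Type} [DecidableEq S] (adj : S → S → Prop) (I I' : Finset S) : Prop :=
  I ∩ I' = ∅ ∧ ¬ ConnOn adj (I ∪ I')

/-- `I^{ev}`: the set of `s ∈ I` such that `I ∖ {s}` is the disjoint union of
`I', I'' ∈ Cal_I^1` with `I' ♠ I''`. -/
def Iev {S : Type} [DecidableEq S] (adj : S → S → Prop) (I : Finset S) : Set S :=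
  {s | s ∈ I ∧ ∃ I' I'' : Finset S, CalI1 adj I' ∧ CalI1 adj I'' ∧
    Spade adj I' I'' ∧ I.erase s = I' ∪ I''}

/-- Property (P0). -/
def P0 {S : Type} [DecidableEq S] (adj : S → S → Prop) (B : Finset (Finset S)) : Prop :=
  ∀ I ∈ B, ∀ I' ∈ B, I = I' ∨ Spade adj I I' ∨ Prec adj I I' ∨ Prec adj I' I

/-- Property (P1). -/
def P1 {S : Type} [DecidableEq S] (adj : S → S → Prop) (B : Finset (Finset S)) : Prop :=
  ∀ I ∈ B, ∃ (k : ℕ) (f : Fin k → Finset S),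
    (∀ j, f j ∈ B ∧ Prec adj (f j) I) ∧
    (∀ j j', j ≠ j' → Disjoint (f j) (f j')) ∧
    Iev adj I ⊆ ⋃ j, ((f j : Finset S) : Set S)

/-- `phi`: finite sets `B` of elements of `Cal_I^1` satisfying (P0) and (P1). -/
def phiSet {S : Type} [DecidableEq S] (adj : S → S → Prop) : Set (Finset (Finset S)) :=
  {B | (∀ I ∈ B, CalI1 adj I) ∧ P0 adj B ∧ P1 adj B}

/-- `supp(B)`. -/
def suppB {S : Type} [DecidableEq S] (B : Finset (Finset S)) : Finset S := B.biUnion id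

/-- `g_s(B)`. -/
def gs {S : Type} [DecidableEq S] (B : Finset (Finset S)) (s : S) : ℕ :=
  (B.filter (fun I => s ∈ I)).card

/-- `e_I = ∑_{s ∈ I} e_s`. -/
def eSum {S : Type} {V : Type} [AddCommGroup V] [Module (ZMod 2) V]
    (e : S → V) (I : Finset S) : V := ∑ s ∈ I, e s

/-- `L_B`: the `F`-span of `{e_I : I ∈ B}`. -/
def LB {S : Type} {V : Type} [AddCommGroup V] [Module (ZMod 2) V]
    (e : S → V) (B : Finset (Finset S)) : Submodule (ZMod 2) V :=
  Submodule.span (ZMod 2) ((fun I => eSum e I) '' (B : Set (Finset S)))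

/-- `eps(B) = ∑_{s ∈ S} ((g_s(B)(g_s(B)+1)/2) mod 2) e_s`. -/
def epsB {S : Type} [DecidableEq S] [Fintype S] {V : Type} [AddCommGroup V]
    [Module (ZMod 2) V] (e : S → V) (B : Finset (Finset S)) : V :=
  ∑ s : S, ((gs B s * (gs B s + 1) / 2 : ℕ) : ZMod 2) • e s

/-- The triple `(V, <,>, e)` (with graph `adj`) is perfect. -/
def IsPerfect {S : Type} [DecidableEq S] [Fintype S] {V : Type} [AddCommGroup V]
    [Module (ZMod 2) V] (adj : S → S → Prop) (e : S → V) : Prop :=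
  (∀ B ∈ phiSet adj,
      (LinearIndependent (ZMod 2) (fun I : {I : Finset S // I ∈ B} => eSum e I.1)) ∧
      (∀ I : Finset S, CalI1 adj I → (eSum e I ∈ LB e B ↔ I ∈ B))) ∧
  (∀ B ∈ phiSet adj, epsB e B ∈ LB e B) ∧
  Set.BijOn (epsB e) (phiSet adj) (⋃ B ∈ phiSet adj, ((LB e B : Submodule (ZMod 2) V) : Set V)) ∧
  (∀ B ∈ phiSet adj, ∀ B' ∈ phiSet adj, epsB e B' ∈ LB e B → ∀ s : S, gs B' s ≤ gs B s)
/-- Adjacency of the cycle of length `N` on `S = ZMod N`. -/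
def cadj (N : ℕ) (i j : ZMod N) : Prop := j = i + 1 ∨ i = j + 1

/-- `V = F^S` for `S = ZMod N`. -/
abbrev Vc (N : ℕ) := ZMod N → ZMod 2

/-- The standard basis vector `e_s`. -/
def eVec (N : ℕ) (s : ZMod N) : Vc N := Pi.single s 1

/-- The line `F·e_S`, where `e_S = ∑_{s ∈ S} e_s`. -/
def radN (N : ℕ) [NeZero N] : Submodule (ZMod 2) (Vc N) :=
  Submodule.span (ZMod 2) {eSum (eVec N) Finset.univ}

/-- `Vbar = V / (F·e_S)`. -/
abbrev VbarN (N : ℕ) [NeZero N] := Vc N ⧸ radN N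

/-- The quotient map `pi : V → Vbar`. -/
def piQ (N : ℕ) [NeZero N] : Vc N →ₗ[ZMod 2] VbarN N := (radN N).mkQ

/-- `ebar_s = pi(e_s)`. -/
def ebar (N : ℕ) [NeZero N] (s : ZMod N) : VbarN N := piQ N (eVec N s)
open scoped Classical in
/-- The connected component of `s` in the induced subgraph of `adj` on `I`. -/
noncomputable def compOf {S : Type} [DecidableEq S] (adj : S → S → Prop)
    (I : Finset S) (s : S) : Finset S :=
  I.filter (fun t => Relation.ReflTransGen (fun a b => a ∈ I ∧ b ∈ I ∧ adj a b) s t)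

/-- `c(I)`: the set of vertex sets of connected components of the induced subgraph on `I`. -/
noncomputable def comps {S : Type} [DecidableEq S] (adj : S → S → Prop)
    (I : Finset S) : Finset (Finset S) :=
  I.image (compOf adj I)

/-- `|c^0(I)|`: the number of connected components of even cardinality. -/
noncomputable def c0card {S : Type} [DecidableEq S] (adj : S → S → Prop)
    (I : Finset S) : ℕ :=
  ((comps adj I).filter (fun C => Even C.card)).card

/-- `V_0 = {e_I : I ⊊ S with |c^0(I)| even}`. -/
def V0set (N : ℕ) [NeZero N] : Set (Vc N) :=
  {v | ∃ I : Finset (ZMod N), I ≠ Finset.univ ∧ Even (c0card (cadj N) I) ∧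
    v = eSum (eVec N) I}

/-- `V_1 = {e_S} ∪ {e_I : ∅ ≠ I ⊊ S with |c^0(I)| odd}`. -/
def V1set (N : ℕ) [NeZero N] : Set (Vc N) :=
  {v | v = eSum (eVec N) Finset.univ ∨ ∃ I : Finset (ZMod N), I ≠ ∅ ∧ I ≠ Finset.univ ∧
    Odd (c0card (cadj N) I) ∧ v = eSum (eVec N) I}
open scoped Classical in
/-- `I^{odd} = I ∖ I^{ev}` (as a `Finset`). -/
noncomputable def IoddF {S : Type} [DecidableEq S] (adj : S → S → Prop)
    (I : Finset S) : Finset S :=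
  I.filter (fun s => s ∉ Iev adj I)

/-- `n_B = |{I ∈ B : ee ⊆ I}|`. -/
def nB {S : Type} [DecidableEq S] (ee : Finset S) (B : Finset (Finset S)) : ℕ :=
  (B.filter (fun I => ee ⊆ I)).card

open scoped Classical in
/-- `B ↦ B^!`: remove the unique `I_B ∈ B` with `|I_B ∩ ee| = 1` when `n_B` is odd;
leave `B` unchanged when `n_B` is even. -/
noncomputable def bangF {S : Type} [DecidableEq S] (ee : Finset S)
    (B : Finset (Finset S)) : Finset (Finset S) :=
  if h : Odd (nB ee B) ∧ ∃ I ∈ B, (I ∩ ee).card = 1 then B.erase h.2.choose else B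

/-- `omega = {B^! : B ∈ phi}`. -/
def omegaSet {S : Type} [DecidableEq S] (adj : S → S → Prop) (ee : Finset S) :
    Set (Finset (Finset S)) :=
  (bangF ee) '' (phiSet adj)

open scoped Classical in
/-- `Btilde`: the unique element of `phi` with `Btilde^! = B`. -/
noncomputable def tildeF {S : Type} [DecidableEq S] (adj : S → S → Prop) (ee : Finset S)
    (C : Finset (Finset S)) : Finset (Finset S) :=
  if h : ∃ B ∈ phiSet adj, bangF ee B = C then h.choose else ∅

/-- `'eps(B) = eps(Btilde)`. -/
noncomputable def epsO {S : Type} [DecidableEq S] [Fintype S] {V : Type} [AddCommGroup V]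
    [Module (ZMod 2) V] (adj : S → S → Prop) (ee : Finset S) (e : S → V)
    (C : Finset (Finset S)) : V :=
  epsB e (tildeF adj ee C)

/-- `B' ⪯ B` on `omega`. -/
def preceqO {S : Type} [DecidableEq S] [Fintype S] {V : Type} [AddCommGroup V]
    [Module (ZMod 2) V] (adj : S → S → Prop) (ee : Finset S) (e : S → V)
    (B' B : Finset (Finset S)) : Prop :=
  ∃ (k : ℕ) (c : ℕ → Finset (Finset S)), c 0 = B' ∧ c k = B ∧
    (∀ i ≤ k, c i ∈ omegaSet adj ee) ∧
    (∀ i < k, epsO adj ee e (c i) ∈ LB e (c (i + 1)))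

/-- The linear form `v ↦ v t + v t'` on `V`. -/
def zeeV (N : ℕ) (t t' : ZMod N) : Vc N →ₗ[ZMod 2] ZMod 2 :=
  (LinearMap.proj t : Vc N →ₗ[ZMod 2] ZMod 2) + (LinearMap.proj t' : Vc N →ₗ[ZMod 2] ZMod 2)

/-- `z_ee : Vbar → F`, the linear map with `z_ee(ebar_s) = 1` iff `s ∈ ee = {t,t'}`. -/
noncomputable def zee (N : ℕ) [NeZero N] (t t' : ZMod N) : VbarN N →ₗ[ZMod 2] ZMod 2 :=
  Submodule.liftQ (radN N) (zeeV N t t') (by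
    rw [radN, Submodule.span_le, Set.singleton_subset_iff]
    have h1 : ∀ u : ZMod N, (eSum (eVec N) Finset.univ) u = 1 := by
      intro u
      simp [eSum, eVec, Finset.sum_apply, Finset.sum_pi_single]
    simp only [SetLike.mem_coe, LinearMap.mem_ker, zeeV, LinearMap.add_apply,
      LinearMap.proj_apply, h1]
    decide)
/-- The maximal elements of a finite family of finsets, under inclusion. -/
def maxElts {S : Type} [DecidableEq S] (C : Finset (Finset S)) : Finset (Finset S) :=
  C.filter (fun I => ∀ I' ∈ C, ¬ I ⊂ I')

/-- `restB B k = B ∖ (B_1 ∪ … ∪ B_k)`: what remains of `B` after removing the first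
`k` layers; the `k`-th layer (`k ≥ 1`) is `B_k = maxElts (restB B (k-1))`. -/
def restB {S : Type} [DecidableEq S] (B : Finset (Finset S)) : ℕ → Finset (Finset S)
  | 0 => B
  | k + 1 => restB B k \ maxElts (restB B k)

/-- The relation `B' ≤ B` on `phi(V)`. -/
def lePhi {S : Type} [DecidableEq S] [Fintype S] {V : Type} [AddCommGroup V]
    [Module (ZMod 2) V] (adj : S → S → Prop) (e : S → V)
    (B' B : Finset (Finset S)) : Prop :=
  ∃ (k : ℕ) (c : ℕ → Finset (Finset S)), c 0 = B' ∧ c k = B ∧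
    (∀ i ≤ k, c i ∈ phiSet adj) ∧
    (∀ i < k, epsB e (c i) ∈ LB e (c (i + 1)))

/-!
By (P0), the maximal members of `B` are pairwise separated and every other member lies inside
one of them, so the connected components of `supp B` are exactly the maximal members of `B`:
odd paths. A path is not the whole cycle, so `supp B` is a nonempty proper subset, and around
the cycle its components alternate with those of the complement; both therefore have the same
number `c` of components. If the components of the complement were all odd as well, then
`N = #supp B + #(S ∖ supp B) ≡ c + c ≡ 0 (mod 2)`. An even component has at least two
vertices, hence an edge.
-/

open Finset Relation

section Components

variable {S : Type} {adj : S → S → Prop} {I M C : Finset S} {s t : S}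

def inducedAdj (adj : S → S → Prop) (I : Finset S) (a b : S) : Prop :=
  a ∈ I ∧ b ∈ I ∧ adj a b

instance [Std.Symm adj] : Std.Symm (inducedAdj adj I) where
  symm _ _ h := ⟨h.2.1, h.1, symm h.2.2⟩

theorem Relation.ReflTransGen.inducedAdj_mono {J : Finset S} (hIJ : I ⊆ J)
    (h : ReflTransGen (inducedAdj adj I) s t) : ReflTransGen (inducedAdj adj J) s t :=
  ReflTransGen.mono (fun _ _ h => ⟨hIJ h.1, hIJ h.2.1, h.2.2⟩) _ _ h

variable [DecidableEq S]

theorem mem_compOf : t ∈ compOf adj I s ↔ t ∈ I ∧ ReflTransGen (inducedAdj adj I) s t := by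
  simp only [compOf, mem_filter]
  rfl

theorem self_mem_compOf (hs : s ∈ I) : s ∈ compOf adj I s :=
  mem_compOf.2 ⟨hs, .refl⟩

theorem compOf_subset : compOf adj I s ⊆ I :=
  fun _ ht => (mem_compOf.1 ht).1

theorem compOf_eq_of_mem [Std.Symm adj] (ht : t ∈ compOf adj I s) :
    compOf adj I t = compOf adj I s := by
  have hst := (mem_compOf.1 ht).2
  have hts : ReflTransGen (inducedAdj adj I) t s := symm hst
  ext u
  simp only [mem_compOf]
  exact and_congr_right fun _ => ⟨hst.trans, hts.trans⟩

theorem mem_compOf_of_adj {a b : S} (ha : a ∈ compOf adj I s) (hb : b ∈ I) (hab : adj a b) :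
    b ∈ compOf adj I s :=
  mem_compOf.2 ⟨hb, (mem_compOf.1 ha).2.tail ⟨compOf_subset ha, hb, hab⟩⟩

theorem mem_comps : C ∈ comps adj I ↔ ∃ s ∈ I, compOf adj I s = C := by
  simp [comps]

theorem nonempty_of_mem_comps (hC : C ∈ comps adj I) : C.Nonempty := by
  obtain ⟨s, hs, rfl⟩ := mem_comps.1 hC
  exact ⟨s, self_mem_compOf hs⟩

theorem card_eq_sum_card_comps (adj : S → S → Prop) [Std.Symm adj] (I : Finset S) :
    #I = ∑ C ∈ comps adj I, #C := by
  rw [card_eq_sum_card_fiberwise (f := compOf adj I) fun s hs => mem_comps.2 ⟨s, hs, rfl⟩]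
  refine sum_congr rfl fun C hC => congrArg card ?_
  obtain ⟨s, -, rfl⟩ := mem_comps.1 hC
  ext t
  simp only [mem_filter]
  exact ⟨fun ⟨_, ht⟩ => ht ▸ self_mem_compOf ‹_›,
    fun ht => ⟨compOf_subset ht, compOf_eq_of_mem ht⟩⟩

theorem card_mod_two_eq_card_comps [Std.Symm adj] (h : ∀ C ∈ comps adj I, Odd #C) :
    #I % 2 = #(comps adj I) % 2 := by
  rw [card_eq_sum_card_comps adj I, sum_nat_mod, sum_congr rfl fun C hC => Nat.odd_iff.1 (h C hC),
    sum_const, smul_eq_mul, mul_one]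

theorem exists_inducedAdj_of_one_lt_card (hC : C ∈ comps adj I) (h : 1 < #C) :
    ∃ a b, inducedAdj adj I a b := by
  obtain ⟨s, -, rfl⟩ := mem_comps.1 hC
  obtain ⟨t, ht, hts⟩ := exists_mem_ne h s
  rcases (mem_compOf.1 ht).2.cases_head with rfl | ⟨b, hsb, -⟩
  · exact absurd rfl hts
  · exact ⟨s, b, hsb⟩

theorem ConnOn.subset_compOf (hM : ConnOn adj M) (hMI : M ⊆ I) (hs : s ∈ M) :
    M ⊆ compOf adj I s :=
  fun t ht => mem_compOf.2 ⟨hMI ht, (hM s hs t ht).inducedAdj_mono hMI⟩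

theorem compOf_subset_of_closed (hs : s ∈ M)
    (hcl : ∀ a ∈ M, ∀ b ∈ I, adj a b → b ∈ M) : compOf adj I s ⊆ M := by
  intro t ht
  obtain ⟨-, hst⟩ := mem_compOf.1 ht
  clear ht
  induction hst with
  | refl => exact hs
  | tail _ hab ih => exact hcl _ ih _ hab.2.1 hab.2.2

theorem ConnOn.union [Std.Symm adj] {M' : Finset S} (hM : ConnOn adj M) (hM' : ConnOn adj M')
    {a b : S} (ha : a ∈ M) (hb : b ∈ M') (hab : adj a b) : ConnOn adj (M ∪ M') := by
  have hreach : ∀ u ∈ M ∪ M', ReflTransGen (inducedAdj adj (M ∪ M')) a u := by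
    intro u hu
    rcases mem_union.1 hu with hu | hu
    · exact (hM a ha u hu).inducedAdj_mono subset_union_left
    · exact .head ⟨mem_union_left _ ha, mem_union_right _ hb, hab⟩
        ((hM' b hb u hu).inducedAdj_mono subset_union_right)
  exact fun u hu v hv => (symm (hreach u hu)).trans (hreach v hv)

theorem IsPathOn.connOn (h : IsPathOn adj I) : ConnOn adj I := by
  obtain ⟨m, f, -, rfl, hadj⟩ := h
  have hstep : ∀ i (hi : i + 1 < m + 1),
      inducedAdj adj (univ.image f) (f ⟨i, by omega⟩) (f ⟨i + 1, hi⟩) ∧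
      inducedAdj adj (univ.image f) (f ⟨i + 1, hi⟩) (f ⟨i, by omega⟩) :=
    fun i hi => ⟨⟨mem_image_of_mem f (mem_univ _), mem_image_of_mem f (mem_univ _),
      (hadj _ _).2 (.inl rfl)⟩, ⟨mem_image_of_mem f (mem_univ _),
      mem_image_of_mem f (mem_univ _), (hadj _ _).2 (.inr rfl)⟩⟩
  have hfrom0 : ∀ i (hi : i < m + 1),
      ReflTransGen (inducedAdj adj (univ.image f)) (f 0) (f ⟨i, hi⟩) ∧
      ReflTransGen (inducedAdj adj (univ.image f)) (f ⟨i, hi⟩) (f 0) := by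
    intro i hi
    induction i with
    | zero => exact ⟨.refl, .refl⟩
    | succ i ih =>
      exact ⟨(ih (by omega)).1.tail (hstep i hi).1, .head (hstep i hi).2 (ih (by omega)).2⟩
  intro s hs t ht
  obtain ⟨i, -, rfl⟩ := mem_image.1 hs
  obtain ⟨j, -, rfl⟩ := mem_image.1 ht
  exact (hfrom0 i i.2).2.trans (hfrom0 j j.2).1

theorem subset_suppB {B : Finset (Finset S)} (hI : I ∈ B) : I ⊆ suppB B :=
  fun _ hs => mem_biUnion.2 ⟨I, hI, hs⟩

theorem compOf_suppB_mem [Std.Symm adj] {B : Finset (Finset S)}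
    (hconn : ∀ I ∈ B, ConnOn adj I) (hP0 : P0 adj B)
    (hs : s ∈ suppB B) : compOf adj (suppB B) s ∈ B := by
  obtain ⟨I, hI, hsI⟩ := mem_biUnion.1 hs
  obtain ⟨M, hIM, hM, hmax⟩ := B.exists_le_maximal hI
  have hsM : s ∈ M := hIM hsI
  have hclosed : ∀ a ∈ M, ∀ b ∈ suppB B, adj a b → b ∈ M := by
    intro a ha b hb hab
    obtain ⟨I', hI', hbI'⟩ := mem_biUnion.1 hb
    rcases hP0 M hM I' hI' with rfl | hsep | hlt | hgt
    · exact hbI'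
    · exact absurd ((hconn M hM).union (hconn I' hI') ha hbI' hab) hsep.2
    · exact absurd (hmax hI' hlt.1.le) hlt.1.not_ge
    · exact hgt.1.le hbI'
  have hcomp : compOf adj (suppB B) s = M := (compOf_subset_of_closed hsM hclosed).antisymm
    ((hconn M hM).subset_compOf (subset_suppB hM) hsM)
  exact hcomp ▸ hM

end Components

section Cycle

variable {N : ℕ}

instance : Std.Symm (cadj N) where
  symm _ _ h := h.symm

theorem cadj_add_one (s : ZMod N) : cadj N s (s + 1) := .inl rfl

theorem eq_univ_of_add_one_mem [NeZero N] {C : Finset (ZMod N)} (hne : C.Nonempty)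
    (hcl : ∀ a ∈ C, a + 1 ∈ C) : C = univ := by
  obtain ⟨s, hs⟩ := hne
  have hadd : ∀ k : ℕ, s + k ∈ C := by
    intro k
    induction k with
    | zero => simpa using hs
    | succ k ih => simpa [add_assoc] using hcl _ ih
  refine eq_univ_of_forall fun t => ?_
  simpa using hadd (t - s).val

theorem compOf_univ [NeZero N] (s : ZMod N) : compOf (cadj N) univ s = univ :=
  eq_univ_of_add_one_mem ⟨s, self_mem_compOf (mem_univ s)⟩ fun a ha =>
    mem_compOf_of_adj ha (mem_univ _) (cadj_add_one a)

/-- In a path the first vertex has at most one neighbour, while in a cycle of length `N ≥ 3`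
every vertex has the two distinct neighbours `s - 1` and `s + 1`. -/
theorem not_isPathOn_univ [NeZero N] (hN : 3 ≤ N) : ¬ IsPathOn (cadj N) univ := by
  rintro ⟨m, f, -, himg, hadj⟩
  have hindex_one : ∀ x, cadj N (f 0) x → ∃ j : Fin (m + 1), (j : ℕ) = 1 ∧ f j = x := by
    intro x hx
    obtain ⟨j, -, rfl⟩ := mem_image.1 (himg ▸ mem_univ x)
    refine ⟨j, ?_, rfl⟩
    have := (hadj 0 j).1 hx
    simp only [Fin.val_zero] at this
    omega
  obtain ⟨j, hj, hfj⟩ := hindex_one _ (cadj_add_one (f 0))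
  obtain ⟨j', hj', hfj'⟩ := hindex_one (f 0 - 1) (.inr (sub_add_cancel _ _).symm)
  have h2 : ((2 : ℕ) : ZMod N) = 0 := by
    have : f 0 + 1 = f 0 - 1 := hfj ▸ hfj' ▸ congrArg f (Fin.ext (hj.trans hj'.symm))
    push_cast
    linear_combination this
  have := Nat.le_of_dvd two_pos ((ZMod.natCast_eq_zero_iff 2 N).1 h2)
  omega

variable {T : Finset (ZMod N)} {s t : ZMod N}

/-- A walk inside `T` starting at a vertex `s` with `s + 1 ∉ T` can only move downwards,
sweeping out a stretch `s, s - 1, …, s - d` of `T`. -/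
theorem exists_stretch_of_reflTransGen (hs : s ∈ T) (hs1 : s + 1 ∉ T)
    (h : ReflTransGen (inducedAdj (cadj N) T) s t) :
    ∃ d : ℕ, t = s - d ∧ ∀ k ≤ d, s - k ∈ T := by
  induction h with
  | refl => exact ⟨0, by simp, fun k hk => by simpa [Nat.le_zero.1 hk] using hs⟩
  | @tail _ c _ hab ih =>
    obtain ⟨d, rfl, hstretch⟩ := ih
    rcases hab.2.2 with rfl | hdown
    · rcases d with _ | d
      · exact absurd (by simpa using hab.2.1) hs1
      · exact ⟨d, by push_cast; ring, fun k hk => hstretch k (by omega)⟩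
    · have hc : c = s - ((d + 1 : ℕ) : ZMod N) := by push_cast; linear_combination -hdown
      refine ⟨d + 1, hc, fun k hk => ?_⟩
      rcases Nat.lt_or_eq_of_le hk with hk | rfl
      · exact hstretch k (by omega)
      · exact hc ▸ hab.2.1

theorem eq_of_reflTransGen_of_add_one_notMem (hs : s ∈ T) (hs1 : s + 1 ∉ T) (ht1 : t + 1 ∉ T)
    (h : ReflTransGen (inducedAdj (cadj N) T) s t) : t = s := by
  obtain ⟨d, rfl, hstretch⟩ := exists_stretch_of_reflTransGen hs hs1 h
  rcases d with _ | d
  · simp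
  · have hnext : s - ((d + 1 : ℕ) : ZMod N) + 1 = s - d := by push_cast; ring
    exact (ht1 (by rw [hnext]; exact hstretch d (by omega))).elim

variable [NeZero N]

theorem card_comps_eq_card_filter (hT : T ≠ univ) :
    #(comps (cadj N) T) = #{s ∈ T | s + 1 ∉ T} := by
  symm
  refine card_bij (fun s _ => compOf (cadj N) T s)
    (fun s hs => mem_comps.2 ⟨s, (mem_filter.1 hs).1, rfl⟩) ?_ ?_
  · intro a ha b hb hab
    have hba := (mem_compOf.1 (hab ▸ self_mem_compOf (mem_filter.1 hb).1)).2
    exact (eq_of_reflTransGen_of_add_one_notMem (mem_filter.1 ha).1 (mem_filter.1 ha).2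
      (mem_filter.1 hb).2 hba).symm
  · intro C hC
    obtain ⟨s, hs, rfl⟩ := mem_comps.1 hC
    by_contra! hnone
    have huniv : compOf (cadj N) T s = univ := by
      refine eq_univ_of_add_one_mem ⟨s, self_mem_compOf hs⟩ fun a ha => ?_
      have ha1 : a + 1 ∈ T := by
        by_contra ha1
        exact hnone a (mem_filter.2 ⟨compOf_subset ha, ha1⟩) (compOf_eq_of_mem ha)
      exact mem_compOf_of_adj ha ha1 (cadj_add_one a)
    exact hT (univ_subset_iff.1 (huniv ▸ compOf_subset))

theorem card_filter_add_one_notMem_eq (T : Finset (ZMod N)) :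
    #{s ∈ T | s + 1 ∉ T} = #{s ∈ univ \ T | s + 1 ∈ T} := by
  have hshift : #{s | s + 1 ∈ T} = #T := by
    have hmap : ({s | s + 1 ∈ T} : Finset (ZMod N)) =
        T.map (Equiv.subRight (1 : ZMod N)).toEmbedding := by
      ext s
      simp
    rw [hmap, card_map]
  have hsplit : {s ∈ univ \ T | s + 1 ∈ T} =
      ({s | s + 1 ∈ T} : Finset (ZMod N)) \ {s ∈ T | s + 1 ∈ T} := by
    ext s
    simp only [mem_filter, mem_sdiff, mem_univ, true_and]
    tauto
  rw [filter_not, card_sdiff_of_subset (filter_subset _ _), hsplit,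
    card_sdiff_of_subset (filter_subset_filter _ (subset_univ T)), hshift]

theorem card_comps_compl (hne : T.Nonempty) (hT : T ≠ univ) :
    #(comps (cadj N) (univ \ T)) = #(comps (cadj N) T) := by
  obtain ⟨s, hs⟩ := hne
  have hTc : univ \ T ≠ univ := fun h => (mem_sdiff.1 (h.ge (mem_univ s))).2 hs
  rw [card_comps_eq_card_filter hT, card_comps_eq_card_filter hTc,
    card_filter_add_one_notMem_eq T]
  congr 1
  ext s
  simp

theorem exists_even_card_mem_comps_compl (hodd : Odd N) (hne : T.Nonempty) (hT : T ≠ univ)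
    (hTodd : ∀ C ∈ comps (cadj N) T, Odd #C) :
    ∃ C ∈ comps (cadj N) (univ \ T), Even #C := by
  by_contra! hcompl
  have h1 := card_mod_two_eq_card_comps hTodd
  have h2 := card_mod_two_eq_card_comps fun C hC => Nat.not_even_iff_odd.1 (hcompl C hC)
  have h3 := card_comps_compl hne hT
  have h4 := card_sdiff_add_card_eq_card (subset_univ T)
  rw [card_univ, ZMod.card] at h4
  have := Nat.odd_iff.1 hodd
  omega

end Cycle

/-- for `∅ ≠ B ∈ phi`, some connected component of `S ∖ supp(B)` has even
cardinality; in particular there is an edge `{s,s'}` disjoint from `supp(B)`. -/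
theorem statement9 (N : ℕ) [NeZero N] (hN : 3 ≤ N) (hodd : Odd N)
    (B : Finset (Finset (ZMod N))) (hB : B ∈ phiSet (cadj N)) (hne : B ≠ ∅) :
    (∃ C ∈ comps (cadj N) (Finset.univ \ suppB B), Even C.card) ∧
    (∃ s s' : ZMod N, cadj N s s' ∧ s ∉ suppB B ∧ s' ∉ suppB B) := by
  obtain ⟨hcal, hP0, -⟩ := hB
  set T := suppB B
  have hcomp : ∀ s ∈ T, compOf (cadj N) T s ∈ B := fun s hs =>
    compOf_suppB_mem (fun I hI => (hcal I hI).1.connOn) hP0 hs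
  have hTne : T.Nonempty := by
    obtain ⟨I, hI⟩ := nonempty_iff_ne_empty.2 hne
    obtain ⟨s, hs⟩ := card_pos.1 (hcal I hI).2.pos
    exact ⟨s, subset_suppB hI hs⟩
  have hTu : T ≠ univ := fun hT => by
    obtain ⟨s, hs⟩ := hTne
    have huniv := hcomp s hs
    rw [hT, compOf_univ] at huniv
    exact not_isPathOn_univ hN (hcal _ huniv).1
  obtain ⟨C, hC, hCeven⟩ := exists_even_card_mem_comps_compl hodd hTne hTu fun C hC => by
    obtain ⟨s, hs, rfl⟩ := mem_comps.1 hC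
    exact (hcal _ (hcomp s hs)).2
  refine ⟨⟨C, hC, hCeven⟩, ?_⟩
  have hCcard : 1 < #C := by
    have := (nonempty_of_mem_comps hC).card_pos
    rcases hCeven with ⟨k, hk⟩
    omega
  obtain ⟨a, b, ha, hb, hab⟩ := exists_inducedAdj_of_one_lt_card hC hCcard
  exact ⟨a, b, hab, (mem_sdiff.1 ha).2, (mem_sdiff.1 hb).2⟩
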